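/- Model reducts in EVT compose contravariantly: for EVT-signature morphisms σ₁ : Σ₁ → Σ₂ and σ₂ : Σ₂ → Σ₃, every EVT-model M₃ over Σ₃ satisfies M₃|_{σ₂ ∘ σ₁} = (M₃|_{σ₂})|_{σ₁}, and every EVT-model morphism h₃ between EVT-models over Σ₃ satisfies h₃|_{σ₂ ∘ σ₁} = (h₃|_{σ₂})|_{σ₁}. -/

import Mathlib

set_option autoImplicit false

/-! ### Event statuses: the three-element poset `ordinary < anticipated < convergent` -/

inductive Status : Type where
  | ordinary | anticipated | convergent
  deriving DecidableEq

def Status.toNat : Status → ℕ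
  | .ordinary => 0
  | .anticipated => 1
  | .convergent => 2

instance : LinearOrder Status :=
  LinearOrder.lift' Status.toNat (by
    intro a b hab
    cases a <;> cases b <;> simp_all [Status.toNat])

/-! ### Many-sorted first-order (FOPEQ) signatures and signature morphisms -/

structure FOSignature : Type 1 where
  Sorts : Type
  Ops : Type
  opArity : Ops → List Sorts
  opResult : Ops → Sorts
  Preds : Type
  predArity : Preds → List Sorts

structure FOSigMorphism (F₁ F₂ : FOSignature) : Type where
  sortMap : F₁.Sorts → F₂.Sorts
  opMap : F₁.Ops → F₂.Ops
  opArity_comm : ∀ f, F₂.opArity (opMap f) = (F₁.opArity f).map sortMap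
  opResult_comm : ∀ f, F₂.opResult (opMap f) = sortMap (F₁.opResult f)
  predMap : F₁.Preds → F₂.Preds
  predArity_comm : ∀ p, F₂.predArity (predMap p) = (F₁.predArity p).map sortMap

def FOSigMorphism.comp {F₁ F₂ F₃ : FOSignature}
    (σ : FOSigMorphism F₁ F₂) (τ : FOSigMorphism F₂ F₃) : FOSigMorphism F₁ F₃ where
  sortMap := τ.sortMap ∘ σ.sortMap
  opMap := τ.opMap ∘ σ.opMap
  opArity_comm f := by
    simp only [Function.comp_apply]
    rw [τ.opArity_comm, σ.opArity_comm, List.map_map]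
  opResult_comm f := by
    simp only [Function.comp_apply]
    rw [τ.opResult_comm, σ.opResult_comm]
  predMap := τ.predMap ∘ σ.predMap
  predArity_comm p := by
    simp only [Function.comp_apply]
    rw [τ.predArity_comm, σ.predArity_comm, List.map_map]

protected def FOSigMorphism.id (F : FOSignature) : FOSigMorphism F F where
  sortMap := id
  opMap := id
  opArity_comm f := by simp
  opResult_comm f := rfl
  predMap := id
  predArity_comm p := by simp

/-! ### Index bookkeeping for arities along a signature morphism -/

def castIdx {α β : Type} {g : α → β} {l₁ : List α} {l₂ : List β}
    (h : l₂ = l₁.map g) (i : Fin l₂.length) : Fin l₁.length :=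
  Fin.cast (by rw [h, List.length_map]) i

theorem get_castIdx {α β : Type} {g : α → β} {l₁ : List α} {l₂ : List β}
    (h : l₂ = l₁.map g) (i : Fin l₂.length) :
    l₂.get i = g (l₁.get (castIdx h i)) := by
  subst h
  simp [castIdx, List.getElem_map]

/-! ### Terms and first-order formulae with sorted free variables -/

inductive Term (F : FOSignature) (X : Type) (xs : X → F.Sorts) : F.Sorts → Type where
  | var (x : X) : Term F X xs (xs x)
  | app (f : F.Ops)
      (args : (i : Fin (F.opArity f).length) → Term F X xs ((F.opArity f).get i)) :
      Term F X xs (F.opResult f)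

def Term.translate {F₁ F₂ : FOSignature} (σ : FOSigMorphism F₁ F₂)
    {X Y : Type} {xs : X → F₁.Sorts} {ys : Y → F₂.Sorts}
    (vmap : X → Y) (hv : ∀ x, ys (vmap x) = σ.sortMap (xs x)) :
    ∀ {s : F₁.Sorts}, Term F₁ X xs s → Term F₂ Y ys (σ.sortMap s)
  | _, .var x => cast (congrArg (Term F₂ Y ys) (hv x)) (Term.var (vmap x))
  | _, .app f args =>
      cast (congrArg (Term F₂ Y ys) (σ.opResult_comm f))
        (Term.app (σ.opMap f) (fun i =>
          cast (congrArg (Term F₂ Y ys) (get_castIdx (σ.opArity_comm f) i).symm)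
            (Term.translate σ vmap hv (args (castIdx (σ.opArity_comm f) i)))))

/-- Extend a sort assignment by a fresh (bound) variable of sort `s`. -/
def extendSort {X S : Type} (xs : X → S) (s : S) : Option X → S
  | none => s
  | some x => xs x

inductive Formula (F : FOSignature) : (X : Type) → (X → F.Sorts) → Type 1 where
  | tru {X : Type} {xs : X → F.Sorts} : Formula F X xs
  | fls {X : Type} {xs : X → F.Sorts} : Formula F X xs
  | eq {X : Type} {xs : X → F.Sorts} {s : F.Sorts}
      (t₁ t₂ : Term F X xs s) : Formula F X xs
  | pred {X : Type} {xs : X → F.Sorts} (p : F.Preds)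
      (args : (i : Fin (F.predArity p).length) → Term F X xs ((F.predArity p).get i)) :
      Formula F X xs
  | and {X : Type} {xs : X → F.Sorts} (φ ψ : Formula F X xs) : Formula F X xs
  | or {X : Type} {xs : X → F.Sorts} (φ ψ : Formula F X xs) : Formula F X xs
  | not {X : Type} {xs : X → F.Sorts} (φ : Formula F X xs) : Formula F X xs
  | imp {X : Type} {xs : X → F.Sorts} (φ ψ : Formula F X xs) : Formula F X xs
  | iff {X : Type} {xs : X → F.Sorts} (φ ψ : Formula F X xs) : Formula F X xs
  | all {X : Type} {xs : X → F.Sorts} (s : F.Sorts)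
      (φ : Formula F (Option X) (extendSort xs s)) : Formula F X xs
  | ex {X : Type} {xs : X → F.Sorts} (s : F.Sorts)
      (φ : Formula F (Option X) (extendSort xs s)) : Formula F X xs


theorem extend_hv {F₁ F₂ : FOSignature} (σ : FOSigMorphism F₁ F₂)
    {X Y : Type} {xs : X → F₁.Sorts} {ys : Y → F₂.Sorts}
    (vmap : X → Y) (hv : ∀ x, ys (vmap x) = σ.sortMap (xs x)) (s : F₁.Sorts) :
    ∀ o : Option X,
      extendSort ys (σ.sortMap s) (Option.map vmap o) = σ.sortMap (extendSort xs s o)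
  | none => rfl
  | some x => hv x

def Formula.translate {F₁ F₂ : FOSignature} (σ : FOSigMorphism F₁ F₂) :
    ∀ {X : Type} {xs : X → F₁.Sorts} {Y : Type} {ys : Y → F₂.Sorts}
      (vmap : X → Y), (∀ x, ys (vmap x) = σ.sortMap (xs x)) →
      Formula F₁ X xs → Formula F₂ Y ys
  | _, _, _, _, _, _, .tru => .tru
  | _, _, _, _, _, _, .fls => .fls
  | _, _, Y, ys, vmap, hv, .eq t₁ t₂ =>
      .eq (Term.translate σ vmap hv t₁) (Term.translate σ vmap hv t₂)
  | _, _, Y, ys, vmap, hv, .pred p args =>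
      .pred (σ.predMap p) (fun i =>
        cast (congrArg (Term F₂ Y ys) (get_castIdx (σ.predArity_comm p) i).symm)
          (Term.translate σ vmap hv (args (castIdx (σ.predArity_comm p) i))))
  | _, _, _, _, vmap, hv, .and φ ψ =>
      .and (Formula.translate σ vmap hv φ) (Formula.translate σ vmap hv ψ)
  | _, _, _, _, vmap, hv, .or φ ψ =>
      .or (Formula.translate σ vmap hv φ) (Formula.translate σ vmap hv ψ)
  | _, _, _, _, vmap, hv, .not φ => .not (Formula.translate σ vmap hv φ)
  | _, _, _, _, vmap, hv, .imp φ ψ =>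
      .imp (Formula.translate σ vmap hv φ) (Formula.translate σ vmap hv ψ)
  | _, _, _, _, vmap, hv, .iff φ ψ =>
      .iff (Formula.translate σ vmap hv φ) (Formula.translate σ vmap hv ψ)
  | _, _, _, _, vmap, hv, .all s φ =>
      .all (σ.sortMap s) (Formula.translate σ (Option.map vmap) (extend_hv σ vmap hv s) φ)
  | _, _, _, _, vmap, hv, .ex s φ =>
      .ex (σ.sortMap s) (Formula.translate σ (Option.map vmap) (extend_hv σ vmap hv s) φ)

/-! ### First-order models, evaluation and satisfaction -/

structure FOModel (F : FOSignature) : Type 1 where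
  carrier : F.Sorts → Type
  opInterp : (f : F.Ops) →
    ((i : Fin (F.opArity f).length) → carrier ((F.opArity f).get i)) →
    carrier (F.opResult f)
  predInterp : (p : F.Preds) →
    ((i : Fin (F.predArity p).length) → carrier ((F.predArity p).get i)) → Prop

def Term.eval {F : FOSignature} (A : FOModel F) {X : Type} {xs : X → F.Sorts}
    (val : ∀ x, A.carrier (xs x)) : ∀ {s : F.Sorts}, Term F X xs s → A.carrier s
  | _, .var x => val x
  | _, .app f args => A.opInterp f (fun i => Term.eval A val (args i))

def extendVal {F : FOSignature} {A : FOModel F} {X : Type} {xs : X → F.Sorts}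
    (val : ∀ x, A.carrier (xs x)) {s : F.Sorts} (a : A.carrier s) :
    ∀ o : Option X, A.carrier (extendSort xs s o)
  | none => a
  | some x => val x

/-- Usual first-order satisfaction of a formula by a model under a valuation of
its free variables (equivalently: satisfaction of the closed formula by the
expansion of the model interpreting each free variable as a `0`-ary operation). -/
def Formula.Sat {F : FOSignature} (A : FOModel F) :
    ∀ {X : Type} {xs : X → F.Sorts}, (∀ x, A.carrier (xs x)) → Formula F X xs → Prop
  | _, _, _, .tru => True
  | _, _, _, .fls => False
  | _, _, val, .eq t₁ t₂ => Term.eval A val t₁ = Term.eval A val t₂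
  | _, _, val, .pred p args => A.predInterp p (fun i => Term.eval A val (args i))
  | _, _, val, .and φ ψ => Formula.Sat A val φ ∧ Formula.Sat A val ψ
  | _, _, val, .or φ ψ => Formula.Sat A val φ ∨ Formula.Sat A val ψ
  | _, _, val, .not φ => ¬ Formula.Sat A val φ
  | _, _, val, .imp φ ψ => Formula.Sat A val φ → Formula.Sat A val ψ
  | _, _, val, .iff φ ψ => Formula.Sat A val φ ↔ Formula.Sat A val ψ
  | _, _, val, .all s φ => ∀ a : A.carrier s, Formula.Sat A (extendVal val a) φ
  | _, _, val, .ex s φ => ∃ a : A.carrier s, Formula.Sat A (extendVal val a) φ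

/-- The reduct of a first-order model along a signature morphism: every symbol of
the source signature is interpreted as the interpretation of its image. -/
def FOModel.reduct {F₁ F₂ : FOSignature} (A : FOModel F₂) (σ : FOSigMorphism F₁ F₂) :
    FOModel F₁ where
  carrier s := A.carrier (σ.sortMap s)
  opInterp f args :=
    cast (congrArg A.carrier (σ.opResult_comm f))
      (A.opInterp (σ.opMap f) (fun i =>
        cast (congrArg A.carrier (get_castIdx (σ.opArity_comm f) i)).symm
          (args (castIdx (σ.opArity_comm f) i))))
  predInterp p args :=
    A.predInterp (σ.predMap p) (fun i =>
      cast (congrArg A.carrier (get_castIdx (σ.predArity_comm p) i)).symm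
        (args (castIdx (σ.predArity_comm p) i)))

/-! ### EVT-signatures and EVT-signature morphisms -/

structure EVTSignature extends FOSignature where
  Events : Type
  status : Events → Status
  init : Events
  init_status : status init = Status.ordinary
  Vars : Type
  varSort : Vars → toFOSignature.Sorts

structure EVTSigMorphism (Sg₁ Sg₂ : EVTSignature) extends
    FOSigMorphism Sg₁.toFOSignature Sg₂.toFOSignature where
  eventMap : Sg₁.Events → Sg₂.Events
  eventMap_init : eventMap Sg₁.init = Sg₂.init
  status_le : ∀ e, Sg₁.status e ≤ Sg₂.status (eventMap e)
  varMap : Sg₁.Vars → Sg₂.Vars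
  varSort_comm : ∀ v, Sg₂.varSort (varMap v) = sortMap (Sg₁.varSort v)

/-- Componentwise composition of EVT-signature morphisms. -/
def EVTSigMorphism.comp {Sg₁ Sg₂ Sg₃ : EVTSignature}
    (σ : EVTSigMorphism Sg₁ Sg₂) (τ : EVTSigMorphism Sg₂ Sg₃) : EVTSigMorphism Sg₁ Sg₃ where
  toFOSigMorphism := σ.toFOSigMorphism.comp τ.toFOSigMorphism
  eventMap := τ.eventMap ∘ σ.eventMap
  eventMap_init := by
    show τ.eventMap (σ.eventMap Sg₁.init) = Sg₃.init
    rw [σ.eventMap_init, τ.eventMap_init]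
  status_le e := le_trans (σ.status_le e) (τ.status_le (σ.eventMap e))
  varMap := τ.varMap ∘ σ.varMap
  varSort_comm v := by
    show Sg₃.varSort (τ.varMap (σ.varMap v))
      = (σ.toFOSigMorphism.comp τ.toFOSigMorphism).sortMap (Sg₁.varSort v)
    rw [τ.varSort_comm, σ.varSort_comm]
    rfl

/-- The componentwise identity EVT-signature morphism. -/
protected def EVTSigMorphism.id (Sg : EVTSignature) : EVTSigMorphism Sg Sg where
  toFOSigMorphism := FOSigMorphism.id Sg.toFOSignature
  eventMap := id
  eventMap_init := rfl
  status_le e := le_refl _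
  varMap := id
  varSort_comm v := rfl

/-! ### EVT-sentences and their translation -/

/-- States assign (sort-appropriate) values to the variables of the signature. -/
def EVTSignature.State (Sg : EVTSignature) (A : FOModel Sg.toFOSignature) : Type :=
  ∀ v : Sg.Vars, A.carrier (Sg.varSort v)

/-- Sorting of the free variables of an EVT-sentence: the variables of the
signature (`Sum.inl`) together with their primed copies (`Sum.inr`). -/
def EVTSignature.sumVarSort (Sg : EVTSignature) :
    Sg.Vars ⊕ Sg.Vars → Sg.toFOSignature.Sorts :=
  Sum.elim Sg.varSort Sg.varSort

/-- An EVT-sentence `⟨e, φ(x̄, x̄′)⟩`: an event name paired with an open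
first-order formula over the variables of the signature and their primed copies. -/
structure EVTSentence (Sg : EVTSignature) : Type 1 where
  event : Sg.Events
  formula : Formula Sg.toFOSignature (Sg.Vars ⊕ Sg.Vars) Sg.sumVarSort


theorem sumVarSort_comm {Sg₁ Sg₂ : EVTSignature} (σ : EVTSigMorphism Sg₁ Sg₂) :
    ∀ x : Sg₁.Vars ⊕ Sg₁.Vars,
      Sg₂.sumVarSort (Sum.map σ.varMap σ.varMap x) = σ.sortMap (Sg₁.sumVarSort x)
  | .inl v => σ.varSort_comm v
  | .inr v => σ.varSort_comm v

/-- Translation of an EVT-sentence along an EVT-signature morphism. -/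
def EVTSentence.translate {Sg₁ Sg₂ : EVTSignature} (ψ : EVTSentence Sg₁)
    (σ : EVTSigMorphism Sg₁ Sg₂) : EVTSentence Sg₂ where
  event := σ.eventMap ψ.event
  formula :=
    Formula.translate σ.toFOSigMorphism (Sum.map σ.varMap σ.varMap)
      (sumVarSort_comm σ) ψ.formula

/-! ### EVT-models, model morphisms, reducts and satisfaction -/

/-- An EVT-model `⟨A, L, R⟩`.  `R` assigns a relation on states to each event
name; the distinguished `Init` event carries the empty relation (encoding that
`R` assigns relations precisely to the non-`Init` events). -/
structure EVTModel (Sg : EVTSignature) : Type 1 where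
  fo : FOModel Sg.toFOSignature
  L : Set (Sg.State fo)
  L_nonempty : L.Nonempty
  R : Sg.Events → Set (Sg.State fo × Sg.State fo)
  R_init : R Sg.init = ∅

/-- Apply a family of functions between carriers pointwise to the values of a state. -/
def mapState {Sg : EVTSignature} {A B : FOModel Sg.toFOSignature}
    (h : ∀ s, A.carrier s → B.carrier s) (st : Sg.State A) : Sg.State B :=
  fun v => h _ (st v)

/-- An EVT-model morphism: a first-order model morphism of the underlying models
mapping (pointwise) initialising states to initialising states and the relation
of each event into the relation of the same event. -/
structure EVTModelHom {Sg : EVTSignature} (M N : EVTModel Sg) : Type where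
  h : ∀ s, M.fo.carrier s → N.fo.carrier s
  op_comm : ∀ (f : Sg.toFOSignature.Ops)
      (args : (i : Fin (Sg.toFOSignature.opArity f).length) →
        M.fo.carrier ((Sg.toFOSignature.opArity f).get i)),
    h _ (M.fo.opInterp f args) = N.fo.opInterp f (fun i => h _ (args i))
  pred_pres : ∀ (p : Sg.toFOSignature.Preds)
      (args : (i : Fin (Sg.toFOSignature.predArity p).length) →
        M.fo.carrier ((Sg.toFOSignature.predArity p).get i)),
    M.fo.predInterp p args → N.fo.predInterp p (fun i => h _ (args i))
  L_map : ∀ st ∈ M.L, mapState h st ∈ N.L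
  R_map : ∀ (e : Sg.Events) (pr : Sg.State M.fo × Sg.State M.fo),
    pr ∈ M.R e → (mapState h pr.1, mapState h pr.2) ∈ N.R e

/-- Composition of EVT-model morphisms. -/
def EVTModelHom.comp {Sg : EVTSignature} {M₁ M₂ M₃ : EVTModel Sg}
    (μ : EVTModelHom M₁ M₂) (ν : EVTModelHom M₂ M₃) : EVTModelHom M₁ M₃ where
  h s x := ν.h s (μ.h s x)
  op_comm f args :=
    (congrArg (ν.h _) (μ.op_comm f args)).trans (ν.op_comm f (fun i => μ.h _ (args i)))
  pred_pres p args hp := ν.pred_pres p _ (μ.pred_pres p args hp)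
  L_map st hst := ν.L_map _ (μ.L_map st hst)
  R_map e pr hpr := ν.R_map e _ (μ.R_map e pr hpr)

/-- The identity EVT-model morphism. -/
protected def EVTModelHom.id {Sg : EVTSignature} (M : EVTModel Sg) : EVTModelHom M M where
  h _ x := x
  op_comm _ _ := rfl
  pred_pres _ _ hp := hp
  L_map _ hst := hst
  R_map _ _ hpr := hpr

/-- The reduct of a state along an EVT-signature morphism (precomposition with
the variable map). -/
def reduceState {Sg₁ Sg₂ : EVTSignature} (σ : EVTSigMorphism Sg₁ Sg₂)
    {A : FOModel Sg₂.toFOSignature} (st : Sg₂.State A) :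
    Sg₁.State (A.reduct σ.toFOSigMorphism) :=
  fun v => cast (congrArg A.carrier (σ.varSort_comm v)) (st (σ.varMap v))

/-- The reduct of an EVT-model along an EVT-signature morphism. -/
def EVTModel.reduct {Sg₁ Sg₂ : EVTSignature} (M : EVTModel Sg₂)
    (σ : EVTSigMorphism Sg₁ Sg₂) : EVTModel Sg₁ where
  fo := M.fo.reduct σ.toFOSigMorphism
  L := reduceState σ '' M.L
  L_nonempty := M.L_nonempty.image _
  R e := (fun pr => (reduceState σ pr.1, reduceState σ pr.2)) '' M.R (σ.eventMap e)
  R_init := by simp only [σ.eventMap_init, M.R_init, Set.image_empty]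


theorem hcast {F : FOSignature} {A B : FOModel F} (h : ∀ s, A.carrier s → B.carrier s)
    {s t : F.Sorts} (e : s = t) (x : A.carrier s) :
    h t (cast (congrArg A.carrier e) x) = cast (congrArg B.carrier e) (h s x) := by
  subst e; rfl

theorem hcast' {F : FOSignature} {A B : FOModel F} (h : ∀ s, A.carrier s → B.carrier s)
    {s t : F.Sorts} (e : s = t) (x : A.carrier t) :
    h s (cast (congrArg A.carrier e).symm x) = cast (congrArg B.carrier e).symm (h t x) := by
  subst e; rfl

/-- The reduct of an EVT-model morphism along an EVT-signature morphism: the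
underlying family of functions reindexed along the sort map. -/
def EVTModelHom.reduct {Sg₁ Sg₂ : EVTSignature} {M N : EVTModel Sg₂}
    (μ : EVTModelHom M N) (σ : EVTSigMorphism Sg₁ Sg₂) :
    EVTModelHom (M.reduct σ) (N.reduct σ) where
  h s x := μ.h (σ.sortMap s) x
  op_comm f args := by
    show μ.h _ ((M.fo.reduct σ.toFOSigMorphism).opInterp f args)
      = (N.fo.reduct σ.toFOSigMorphism).opInterp f (fun i => μ.h _ (args i))
    simp only [FOModel.reduct]
    rw [hcast μ.h, μ.op_comm]
    refine congrArg (cast (congrArg N.fo.carrier (σ.opResult_comm f)))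
      (congrArg (N.fo.opInterp (σ.opMap f)) ?_)
    · funext i
      exact hcast' μ.h (get_castIdx (σ.opArity_comm f) i)
        (args (castIdx (σ.opArity_comm f) i))
    · exact σ.opResult_comm f
  pred_pres p args hp := by
    show (N.fo.reduct σ.toFOSigMorphism).predInterp p (fun i => μ.h _ (args i))
    simp only [FOModel.reduct] at hp ⊢
    have := μ.pred_pres _ _ hp
    convert this using 2 with i
    exact (hcast' μ.h (get_castIdx (σ.predArity_comm p) i)
      (args (castIdx (σ.predArity_comm p) i))).symm
  L_map st hst := by
    show mapState (fun s x => μ.h (σ.sortMap s) x) st ∈ (N.reduct σ).L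
    rcases hst with ⟨st₂, hst₂, rfl⟩
    refine ⟨mapState μ.h st₂, μ.L_map st₂ hst₂, ?_⟩
    funext v
    exact (hcast μ.h (σ.varSort_comm v) (st₂ (σ.varMap v))).symm
  R_map e pr hpr := by
    rcases hpr with ⟨pr₂, hpr₂, rfl⟩
    refine ⟨(mapState μ.h pr₂.1, mapState μ.h pr₂.2), μ.R_map _ pr₂ hpr₂, ?_⟩
    have key : ∀ st : Sg₂.State M.fo,
        reduceState σ (mapState μ.h st)
          = mapState (fun s x => μ.h (σ.sortMap s) x) (reduceState σ st) := by
      intro st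
      funext v
      exact (hcast μ.h (σ.varSort_comm v) (st (σ.varMap v))).symm
    show (reduceState σ (mapState μ.h pr₂.1), reduceState σ (mapState μ.h pr₂.2)) = _
    rw [key, key]
    exact rfl

/-- The valuation of the variables and their primed copies given by a pair of
states (a before-state and an after-state). -/
def pairVal {Sg : EVTSignature} {A : FOModel Sg.toFOSignature} (s s' : Sg.State A) :
    ∀ x : Sg.Vars ⊕ Sg.Vars, A.carrier (Sg.sumVarSort x)
  | .inl v => s v
  | .inr v => s' v

/-- Satisfaction of an EVT-sentence by an EVT-model: for a non-`Init` event,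
the formula must hold for every pair of states in the relation of the event;
for the `Init` event, the formula must hold for every initialising after-state
(the unprimed variables, which do not occur in `Init`-sentences, being
universally quantified). -/
def EVTModel.Satisfies {Sg : EVTSignature} (M : EVTModel Sg) (ψ : EVTSentence Sg) : Prop :=
  (ψ.event ≠ Sg.init →
    ∀ pr ∈ M.R ψ.event, Formula.Sat M.fo (pairVal pr.1 pr.2) ψ.formula) ∧
  (ψ.event = Sg.init →
    ∀ s' ∈ M.L, ∀ s : Sg.State M.fo, Formula.Sat M.fo (pairVal s s') ψ.formula)

/-! ### Expansions of first-order signatures and models by (primed) variables -/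

/-- The FOPEQ-signature `Σ^(V,V′)`: the underlying first-order signature of an
EVT-signature extended by a `0`-ary operation for each variable and each primed
variable. -/
def EVTSignature.expSig (Sg : EVTSignature) : FOSignature where
  Sorts := Sg.toFOSignature.Sorts
  Ops := Sg.toFOSignature.Ops ⊕ (Sg.Vars ⊕ Sg.Vars)
  opArity := Sum.elim Sg.toFOSignature.opArity (fun _ => [])
  opResult := Sum.elim Sg.toFOSignature.opResult (Sum.elim Sg.varSort Sg.varSort)
  Preds := Sg.toFOSignature.Preds
  predArity := Sg.toFOSignature.predArity

/-- The expansion `A^(s,s′)` of a first-order model by a pair of states: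
the added `0`-ary operations for the variables are interpreted by `st`,
those for the primed variables by `st'`. -/
def FOModel.expand {Sg : EVTSignature} (A : FOModel Sg.toFOSignature)
    (st st' : Sg.State A) : FOModel Sg.expSig where
  carrier := A.carrier
  opInterp f := match f with
    | .inl g => fun args => A.opInterp g args
    | .inr (.inl v) => fun _ => st v
    | .inr (.inr v) => fun _ => st' v
  predInterp := A.predInterp

/-- The FOPEQ-signature morphism `Σ₁^(V₁,V₁′) → Σ₂^(V₂,V₂′)` induced by an
EVT-signature morphism: it acts as `σ` on sorts, operations and predicates and
sends the added `0`-ary operation of each (primed) variable to the added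
`0`-ary operation of its `σ_V`-image. -/
def EVTSigMorphism.expSigMorphism {Sg₁ Sg₂ : EVTSignature} (σ : EVTSigMorphism Sg₁ Sg₂) :
    FOSigMorphism Sg₁.expSig Sg₂.expSig where
  sortMap := σ.sortMap
  opMap := Sum.map σ.opMap (Sum.map σ.varMap σ.varMap)
  opArity_comm f := by
    rcases f with f | v | v
    · exact σ.opArity_comm f
    · rfl
    · rfl
  opResult_comm f := by
    rcases f with f | v | v
    · exact σ.opResult_comm f
    · exact σ.varSort_comm v
    · exact σ.varSort_comm v
  predMap := σ.predMap
  predArity_comm := σ.predArity_comm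

/-- A commuting square of EVT-signature morphisms is a pushout square if it
satisfies the usual universal property. -/
def IsPushoutSquare {Sg Sg₁ Sg₂ Sg' : EVTSignature}
    (σ₁ : EVTSigMorphism Sg Sg₁) (σ₂ : EVTSigMorphism Sg Sg₂)
    (σ₁' : EVTSigMorphism Sg₁ Sg') (σ₂' : EVTSigMorphism Sg₂ Sg') : Prop :=
  σ₁.comp σ₁' = σ₂.comp σ₂' ∧
  ∀ (Sg'' : EVTSignature) (τ₁ : EVTSigMorphism Sg₁ Sg'') (τ₂ : EVTSigMorphism Sg₂ Sg''),
    σ₁.comp τ₁ = σ₂.comp τ₂ →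
    ∃! u : EVTSigMorphism Sg' Sg'', σ₁'.comp u = τ₁ ∧ σ₂'.comp u = τ₂

/-! ### The comorphism `ρ : FOPEQ → EVT` -/

/-- `ρ^Sign` : extend a FOPEQ-signature by the single event `Init` (with status
`ordinary`) and the empty set of variables. -/
def rhoSign (F : FOSignature) : EVTSignature where
  toFOSignature := F
  Events := Unit
  status _ := Status.ordinary
  init := ()
  init_status := rfl
  Vars := Empty
  varSort := fun v => v.elim

/-- `ρ^Sen` : view a closed first-order sentence as the EVT-sentence `⟨Init, ψ⟩`. -/
def rhoSen (F : FOSignature) (ψ : Formula F Empty (fun v => v.elim)) :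
    EVTSentence (rhoSign F) where
  event := ()
  formula :=
    Formula.translate (FOSigMorphism.id F) (fun v => v.elim) (fun v => v.elim) ψ

/-- `ρ^Mod` : the first-order component of an EVT-model over `ρ^Sign(Σ)`. -/
def rhoMod (F : FOSignature) (M : EVTModel (rhoSign F)) : FOModel F := M.fo

/-!
Every component of a reduct is built by precomposing with the signature morphism, so the
carriers, the states and the underlying maps of morphisms of `M|_{σ₂ ∘ σ₁}` and
`(M|_{σ₂})|_{σ₁}` coincide definitionally. What remains is that the casts along the arity,
result-sort and variable-sort equations of `σ₂ ∘ σ₁` agree with the composite casts along those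
of `σ₂` and `σ₁`, which is proof irrelevance (`cast_cast`).
-/

theorem FOModel.reduct_comp {F₁ F₂ F₃ : FOSignature}
    (σ : FOSigMorphism F₁ F₂) (τ : FOSigMorphism F₂ F₃) (A : FOModel F₃) :
    A.reduct (σ.comp τ) = (A.reduct τ).reduct σ := by
  refine congrArg₂ (FOModel.mk (fun s => A.carrier (τ.sortMap (σ.sortMap s)))) ?_ ?_
  · funext f args
    refine eq_of_heq ((cast_heq _ _).trans
      (HEq.trans ?_ ((cast_heq _ _).trans (cast_heq _ _)).symm))
    exact heq_of_eq (congrArg (A.opInterp _) (funext fun _ => (cast_cast _ _ _).symm))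
  · funext p args
    refine congrArg (A.predInterp _) (funext fun _ => ?_)
    exact (cast_cast _ _ _).symm

theorem reduceState_comp {Sg₁ Sg₂ Sg₃ : EVTSignature}
    (σ₁ : EVTSigMorphism Sg₁ Sg₂) (σ₂ : EVTSigMorphism Sg₂ Sg₃)
    {A : FOModel Sg₃.toFOSignature} (st : Sg₃.State A) :
    reduceState (σ₁.comp σ₂) st = (reduceState σ₁ (reduceState σ₂ st) : Sg₁.State _) :=
  funext fun _ => (cast_cast _ _ _).symm

attribute [ext] EVTModel

theorem EVTModel.reduct_comp {Sg₁ Sg₂ Sg₃ : EVTSignature}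
    (σ₁ : EVTSigMorphism Sg₁ Sg₂) (σ₂ : EVTSigMorphism Sg₂ Sg₃) (M : EVTModel Sg₃) :
    M.reduct (σ₁.comp σ₂) = (M.reduct σ₂).reduct σ₁ := by
  have hstate : reduceState (σ₁.comp σ₂) = reduceState σ₁ ∘ reduceState (A := M.fo) σ₂ :=
    funext (reduceState_comp σ₁ σ₂)
  ext1
  · exact FOModel.reduct_comp σ₁.toFOSigMorphism σ₂.toFOSigMorphism M.fo
  · refine heq_of_eq ?_
    change reduceState (σ₁.comp σ₂) '' M.L = reduceState σ₁ '' (reduceState σ₂ '' M.L)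
    rw [hstate]
    exact Set.image_comp _ _ _
  · refine heq_of_eq (funext fun e => ?_)
    change Prod.map (reduceState (σ₁.comp σ₂)) (reduceState (σ₁.comp σ₂)) '' _
      = Prod.map (reduceState σ₁) (reduceState σ₁) ''
          (Prod.map (reduceState σ₂) (reduceState σ₂) '' _)
    rw [hstate, ← Set.image_comp, Prod.map_comp_map]
    rfl

theorem EVTModelHom.hext {Sg : EVTSignature} {M₁ M₂ N₁ N₂ : EVTModel Sg}
    (hM : M₁ = M₂) (hN : N₁ = N₂) {f : EVTModelHom M₁ N₁} {g : EVTModelHom M₂ N₂}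
    (h : HEq f.h g.h) : HEq f g := by
  subst hM hN
  cases f
  cases g
  cases h
  rfl

theorem EVTModelHom.reduct_comp {Sg₁ Sg₂ Sg₃ : EVTSignature}
    (σ₁ : EVTSigMorphism Sg₁ Sg₂) (σ₂ : EVTSigMorphism Sg₂ Sg₃) {M N : EVTModel Sg₃}
    (μ : EVTModelHom M N) :
    HEq (μ.reduct (σ₁.comp σ₂)) ((μ.reduct σ₂).reduct σ₁) :=
  EVTModelHom.hext (EVTModel.reduct_comp σ₁ σ₂ M) (EVTModel.reduct_comp σ₁ σ₂ N) HEq.rfl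

/-- Model reducts in EVT compose contravariantly: for
EVT-signature morphisms `σ₁ : Σ₁ → Σ₂` and `σ₂ : Σ₂ → Σ₃`, every EVT-model
`M₃` over `Σ₃` satisfies `M₃|_{σ₂ ∘ σ₁} = (M₃|_{σ₂})|_{σ₁}`, and every
EVT-model morphism `h₃` between EVT-models over `Σ₃` satisfies
`h₃|_{σ₂ ∘ σ₁} = (h₃|_{σ₂})|_{σ₁}` (as heterogeneous equality, the two sides
being morphisms between the correspondingly equal reduct models). -/
theorem reduct_comp {Sg₁ Sg₂ Sg₃ : EVTSignature}
    (σ₁ : EVTSigMorphism Sg₁ Sg₂) (σ₂ : EVTSigMorphism Sg₂ Sg₃) :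
    (∀ M₃ : EVTModel Sg₃, M₃.reduct (σ₁.comp σ₂) = (M₃.reduct σ₂).reduct σ₁) ∧
    (∀ (M N : EVTModel Sg₃) (h₃ : EVTModelHom M N),
      HEq (h₃.reduct (σ₁.comp σ₂)) ((h₃.reduct σ₂).reduct σ₁)) :=
  ⟨EVTModel.reduct_comp σ₁ σ₂, fun _ _ => EVTModelHom.reduct_comp σ₁ σ₂⟩
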